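/- In the category NC of all noncrossing partitions, two projective partitions p ∈ NC(k,k) and q ∈ NC(l,l) are equivalent (there exists r ∈ NC(k,l) with r*r = p and rr* = q) if and only if t(p) = t(q). -/

import Mathlib

/-- A two-row partition with `k` upper and `l` lower points, encoded as the
equivalence relation whose classes are the blocks. -/
abbrev PP (k l : ℕ) := Setoid (Fin k ⊕ Fin l)

/-- The involution `p*` (turning `p` upside down). -/
def swapP {k l : ℕ} (p : PP k l) : PP l k := Setoid.comap Sum.swap p

/-- Disjoint union of two setoids. -/
def sumSetoid {α β : Type*} (s : Setoid α) (t : Setoid β) : Setoid (α ⊕ β) where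
  r := Sum.LiftRel s.r t.r
  iseqv := by
    refine ⟨fun x => ?_, fun {x y} h => ?_, fun {x y z} h1 h2 => ?_⟩
    · cases x with
      | inl a => exact Sum.LiftRel.inl (s.iseqv.refl a)
      | inr b => exact Sum.LiftRel.inr (t.iseqv.refl b)
    · cases h with
      | inl h => exact Sum.LiftRel.inl (s.iseqv.symm h)
      | inr h => exact Sum.LiftRel.inr (t.iseqv.symm h)
    · cases h1 with
      | inl h1 =>
        cases h2 with
        | inl h2 => exact Sum.LiftRel.inl (s.iseqv.trans h1 h2)
      | inr h1 =>
        cases h2 with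
        | inr h2 => exact Sum.LiftRel.inr (t.iseqv.trans h1 h2)

/-- Reindexing equivalence for the horizontal concatenation (tensor product). -/
def tensorEquiv (k l k' l' : ℕ) :
    (Fin (k + k') ⊕ Fin (l + l')) ≃ ((Fin k ⊕ Fin l) ⊕ (Fin k' ⊕ Fin l')) :=
  (Equiv.sumCongr finSumFinEquiv.symm finSumFinEquiv.symm).trans
    (Equiv.sumSumSumComm (Fin k) (Fin k') (Fin l) (Fin l'))

/-- Tensor product (horizontal concatenation) of partitions. -/
def tensorP {k l k' l' : ℕ} (p : PP k l) (q : PP k' l') : PP (k + k') (l + l') :=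
  Setoid.comap (tensorEquiv k l k' l') (sumSetoid p q)

/-- The relation on `k ⊔ l ⊔ m` points generated by `p` (upper part) and `q` (lower part). -/
def midRel {k l m : ℕ} (p : PP k l) (q : PP l m) :
    (Fin k ⊕ (Fin l ⊕ Fin m)) → (Fin k ⊕ (Fin l ⊕ Fin m)) → Prop := fun x y =>
  (∃ a b : Fin k ⊕ Fin l, p.r a b ∧ x = Sum.map id Sum.inl a ∧ y = Sum.map id Sum.inl b) ∨
  (∃ a b : Fin l ⊕ Fin m, q.r a b ∧ x = Sum.inr a ∧ y = Sum.inr b)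

/-- The equivalence relation generated on `k ⊔ l ⊔ m` in the composition procedure. -/
def bigS {k l m : ℕ} (p : PP k l) (q : PP l m) : Setoid (Fin k ⊕ (Fin l ⊕ Fin m)) :=
  Relation.EqvGen.setoid (midRel p q)

/-- `compP q p` is the vertical composition `qp` (apply `p : P(k,l)` first, then `q : P(l,m)`). -/
def compP {k l m : ℕ} (q : PP l m) (p : PP k l) : PP k m :=
  Setoid.comap (Sum.map id Sum.inr) (bigS p q)

/-- `rlP q p` : the number of closed loops removed in the composition `qp`,
i.e. the blocks of the generated relation consisting only of middle points. -/
noncomputable def rlP {k l m : ℕ} (q : PP l m) (p : PP k l) : ℕ :=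
  Nat.card {c : Quotient (bigS p q) //
    ∀ x, Quotient.mk (bigS p q) x = c → ∃ b : Fin l, x = Sum.inr (Sum.inl b)}

/-- `b(p)` : number of blocks. -/
noncomputable def bP {k l : ℕ} (p : PP k l) : ℕ := Nat.card (Quotient p)

/-- `t(p)` : number of through-blocks (blocks meeting both rows). -/
noncomputable def tP {k l : ℕ} (p : PP k l) : ℕ :=
  Nat.card {c : Quotient p // (∃ a : Fin k, Quotient.mk p (Sum.inl a) = c) ∧
    (∃ b : Fin l, Quotient.mk p (Sum.inr b) = c)}

/-- `β(p) = b(p) - t(p)` : number of non-through-blocks. -/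
noncomputable def betaP {k l : ℕ} (p : PP k l) : ℕ := bP p - tP p

/-- The identity partition `|^{⊗k}`. -/
def idP (k : ℕ) : PP k k := Setoid.ker (Sum.elim (fun i : Fin k => i) (fun i : Fin k => i))

/-- A pair partition: all blocks have size two. -/
def isPair {k l : ℕ} (p : PP k l) : Prop := ∀ x, Nat.card {y // p.r x y} = 2

/-- A through-partition: a pair partition each of whose blocks connects exactly one
upper point to exactly one lower point. -/
def isThrough {k : ℕ} (p : PP k k) : Prop :=
  isPair p ∧ (∀ a b : Fin k, p.r (Sum.inl a) (Sum.inl b) → a = b) ∧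
    (∀ a b : Fin k, p.r (Sum.inr a) (Sum.inr b) → a = b)

/-- A building partition. -/
def isBuilding {k l : ℕ} (p : PP k l) : Prop :=
  (∀ b b' : Fin l, p.r (Sum.inr b) (Sum.inr b') → b = b') ∧
  (∀ b : Fin l, ∃ a : Fin k, p.r (Sum.inl a) (Sum.inr b)) ∧
  (∀ b b' : Fin l, ∀ a a' : Fin k, b < b' →
    IsLeast {x : Fin k | p.r (Sum.inl x) (Sum.inr b)} a →
    IsLeast {x : Fin k | p.r (Sum.inl x) (Sum.inr b')} a' → a < a')

/-- A projective partition: symmetric and idempotent. -/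
def isProjective {k : ℕ} (p : PP k k) : Prop := swapP p = p ∧ compP p p = p

/-- Linear position of the points, reading the upper row left to right and then the
lower row right to left. -/
def posP (k l : ℕ) : Fin k ⊕ Fin l → ℕ :=
  Sum.elim (fun i => (i : ℕ)) (fun j => k + (l - 1 - (j : ℕ)))

/-- Noncrossing partitions. -/
def isNC {k l : ℕ} (p : PP k l) : Prop :=
  ¬ ∃ x1 x2 x3 x4 : Fin k ⊕ Fin l,
    posP k l x1 < posP k l x2 ∧ posP k l x2 < posP k l x3 ∧ posP k l x3 < posP k l x4 ∧
    p.r x1 x3 ∧ p.r x2 x4 ∧ ¬ p.r x1 x2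

/-!
The composite `r* r` has the same upper blocks and the same upper through-points as `r`, and a
projective partition `p = p* p` is determined by these data. Counting through-blocks by their
leftmost upper points gives `t(r* r) = t(r) = t(r*) = t(r r*)`. Conversely, if `t(p) = t(q)`,
match the through-blocks of `p` and `q` in left-to-right order and let `r` carry the upper
blocks of `p` on top and those of `q`, turned upside down, at the bottom, matched through-blocks
being glued: then `r* r = p` and `r r* = q`. Noncrossingness of `r` reduces to that of `p` and
`q`, since in a noncrossing projective partition a through-point enclosed by a block belongs to
it, so the through-blocks follow each other from left to right.
-/

open Sum

section BlockMin

variable {α : Type*} [LinearOrder α] [Fintype α] (s : Setoid α)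

open Classical in
noncomputable def blockMin (a : α) : α :=
  (Finset.univ.filter (s a ·)).min' ⟨a, Finset.mem_filter.2 ⟨Finset.mem_univ a, s.refl a⟩⟩

theorem rel_blockMin (a : α) : s a (blockMin s a) := by
  classical
  exact (Finset.mem_filter.1 (Finset.min'_mem _ _)).2

variable {s}

theorem blockMin_le {a b : α} (h : s a b) : blockMin s a ≤ b := by
  classical
  exact Finset.min'_le _ _ (Finset.mem_filter.2 ⟨Finset.mem_univ b, h⟩)

theorem blockMin_eq_blockMin_iff {a b : α} : blockMin s a = blockMin s b ↔ s a b := by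
  refine ⟨fun h => s.trans (rel_blockMin s a) (h ▸ s.symm (rel_blockMin s b)), fun h => ?_⟩
  exact le_antisymm (blockMin_le (s.trans h (rel_blockMin s b)))
    (blockMin_le (s.trans (s.symm h) (rel_blockMin s a)))

theorem blockMin_blockMin (a : α) : blockMin s (blockMin s a) = blockMin s a :=
  blockMin_eq_blockMin_iff.2 (s.symm (rel_blockMin s a))

end BlockMin

section ThroughBlocks

variable {k l : ℕ}

theorem swapP_rel (r : PP k l) (x y : Fin l ⊕ Fin k) : (swapP r).r x y ↔ r.r x.swap y.swap :=
  Iff.rfl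

theorem swapP_swapP (r : PP k l) : swapP (swapP r) = r :=
  Setoid.ext fun x y => by simp only [swapP_rel, Sum.swap_swap]

def upperSetoid (r : PP k l) : Setoid (Fin k) := Setoid.comap inl r

def InThroughBlock (r : PP k l) (z : Fin k ⊕ Fin l) : Prop :=
  (∃ a, r.r z (inl a)) ∧ ∃ b, r.r z (inr b)

theorem inThroughBlock_inl_iff {r : PP k l} {a : Fin k} :
    InThroughBlock r (inl a) ↔ ∃ b, r.r (inl a) (inr b) :=
  ⟨And.right, fun h => ⟨⟨a, r.refl _⟩, h⟩⟩

theorem InThroughBlock.of_rel {r : PP k l} {z z' : Fin k ⊕ Fin l} (h : r.r z z')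
    (hz' : InThroughBlock r z') : InThroughBlock r z :=
  ⟨hz'.1.imp fun _ => r.trans h, hz'.2.imp fun _ => r.trans h⟩

open Classical in
noncomputable def throughMins (r : PP k l) : Finset (Fin k) :=
  Finset.univ.filter fun a => InThroughBlock r (inl a) ∧ blockMin (upperSetoid r) a = a

theorem mem_throughMins {r : PP k l} {a : Fin k} :
    a ∈ throughMins r ↔ InThroughBlock r (inl a) ∧ blockMin (upperSetoid r) a = a := by
  simp [throughMins]

theorem blockMin_mem_throughMins {r : PP k l} {a : Fin k} (ha : InThroughBlock r (inl a)) :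
    blockMin (upperSetoid r) a ∈ throughMins r :=
  mem_throughMins.2 ⟨ha.of_rel (r.symm (rel_blockMin (upperSetoid r) a)), blockMin_blockMin a⟩

/-- Each through-block has an upper point; it is counted by its leftmost one. -/
theorem tP_eq_card_throughMins (r : PP k l) : tP r = (throughMins r).card := by
  have hthrough (v : throughMins r) : ∃ b, (⟦inr b⟧ : Quotient r) = ⟦inl v.1⟧ := by
    obtain ⟨b, hb⟩ := inThroughBlock_inl_iff.1 (mem_throughMins.1 v.2).1
    exact ⟨b, Quotient.sound (r.symm hb)⟩
  rw [← Nat.card_eq_finsetCard]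
  refine Nat.card_congr (Equiv.ofBijective (fun v => ⟨⟦inl v.1⟧, ⟨v.1, rfl⟩, hthrough v⟩)
    ⟨?_, ?_⟩).symm
  · rintro ⟨v, hv⟩ ⟨w, hw⟩ h
    have hvw : r.r (inl v) (inl w) := Quotient.exact (congrArg Subtype.val h)
    rw [Subtype.mk.injEq, ← (mem_throughMins.1 hv).2, ← (mem_throughMins.1 hw).2]
    exact blockMin_eq_blockMin_iff.2 hvw
  · rintro ⟨c, ⟨a, rfl⟩, ⟨b, hb⟩⟩
    have ha : InThroughBlock r (inl a) := inThroughBlock_inl_iff.2 ⟨b, r.symm (Quotient.exact hb)⟩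
    exact ⟨⟨_, blockMin_mem_throughMins ha⟩,
      Subtype.ext (Quotient.sound (r.symm (rel_blockMin (upperSetoid r) a)))⟩

theorem tP_swapP (r : PP k l) : tP (swapP r) = tP r := by
  let e : Quotient (swapP r) ≃ Quotient r := Quotient.congr (Equiv.sumComm _ _) fun _ _ => Iff.rfl
  have he : ∀ z, e ⟦z⟧ = ⟦z.swap⟧ := fun _ => rfl
  refine Nat.card_congr (e.subtypeEquiv fun c => ?_)
  simp only [← e.apply_eq_iff_eq, he, Sum.swap_inl, Sum.swap_inr]
  exact and_comm

end ThroughBlocks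

section SelfComposition

variable {k l : ℕ} (r : PP k l)

/-- The three rows of points in the composition `r* r` (upper row of `r`, lower row of `r` in
the middle, upper row of `r` again) mapped to the points of `r` they stand for. -/
def foldRows (k l : ℕ) : Fin k ⊕ (Fin l ⊕ Fin k) → Fin k ⊕ Fin l :=
  Sum.elim inl (Sum.elim inr inl)

/-- An equivalence relation containing the generators of `bigS r (swapP r)`: the upper and
lower copies of a block of `r` are related only if it is a through-block. -/
def SelfCompInvariant (x y : Fin k ⊕ (Fin l ⊕ Fin k)) : Prop :=
  r.r (foldRows k l x) (foldRows k l y) ∧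
    (x.isLeft = y.isLeft ∨ InThroughBlock r (foldRows k l x))

theorem selfCompInvariant_equivalence : Equivalence (SelfCompInvariant r) where
  refl _ := ⟨r.refl _, Or.inl rfl⟩
  symm := fun ⟨h, hs⟩ => ⟨r.symm h, hs.imp Eq.symm (.of_rel (r.symm h))⟩
  trans := fun ⟨h₁, hs₁⟩ ⟨h₂, hs₂⟩ =>
    ⟨r.trans h₁ h₂, hs₁.elim (fun e => hs₂.imp e.trans (.of_rel h₁)) Or.inr⟩

theorem midRel_le_selfCompInvariant : midRel r (swapP r) ≤ SelfCompInvariant r := by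
  rintro _ _ (⟨a, b, hab, rfl, rfl⟩ | ⟨a, b, hab, rfl, rfl⟩)
  · refine ⟨by cases a <;> cases b <;> exact hab, ?_⟩
    rcases a with a | a <;> rcases b with b | b
    · exact Or.inl rfl
    · exact Or.inr ⟨⟨a, r.refl _⟩, ⟨b, hab⟩⟩
    · exact Or.inr ⟨⟨b, hab⟩, ⟨a, r.refl _⟩⟩
    · exact Or.inl rfl
  · exact ⟨by cases a <;> cases b <;> exact hab, Or.inl rfl⟩

theorem compP_swapP_self_rel_iff (x y : Fin k ⊕ Fin k) :
    (compP (swapP r) r).r x y ↔ r.r (inl (x.elim id id)) (inl (y.elim id id)) ∧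
      (x.isLeft = y.isLeft ∨ InThroughBlock r (inl (x.elim id id))) := by
  have gen_upper {a b : Fin k ⊕ Fin l} (h : r.r a b) :
      (bigS r (swapP r)).r (Sum.map id inl a) (Sum.map id inl b) :=
    .rel _ _ (Or.inl ⟨a, b, h, rfl, rfl⟩)
  have gen_lower {a b : Fin l ⊕ Fin k} (h : r.r a.swap b.swap) :
      (bigS r (swapP r)).r (inr a) (inr b) :=
    .rel _ _ (Or.inr ⟨a, b, h, rfl, rfl⟩)
  -- a through-block of `r` links the upper copy of `a` to the lower copy via a middle point
  have cross {a b : Fin k} (hab : r.r (inl a) (inl b)) (ha : InThroughBlock r (inl a)) :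
      (compP (swapP r) r).r (inl a) (inr b) := by
    obtain ⟨m, hm⟩ := inThroughBlock_inl_iff.1 ha
    exact (bigS r (swapP r)).trans (gen_upper (a := inl a) (b := inr m) hm)
      ((bigS r (swapP r)).trans (gen_lower (a := inl m) (b := inr a) (r.symm hm))
        (gen_lower (a := inr a) (b := inr b) hab))
  constructor
  · intro h
    have := (selfCompInvariant_equivalence r).eqvGen_iff.1
      (Relation.EqvGen.mono (midRel_le_selfCompInvariant r) _ _ h)
    cases x <;> cases y <;> exact this
  · rintro ⟨hxy, hs⟩
    rcases x with a | a <;> rcases y with b | b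
    · exact gen_upper (a := inl a) (b := inl b) hxy
    · exact cross hxy (hs.resolve_left Bool.noConfusion)
    · exact (compP (swapP r) r).symm
        (cross (r.symm hxy) ((hs.resolve_left Bool.noConfusion).of_rel (r.symm hxy)))
    · exact gen_lower (a := inr a) (b := inr b) hxy

theorem upperSetoid_compP_swapP_self : upperSetoid (compP (swapP r) r) = upperSetoid r :=
  Setoid.ext fun a b => by
    change (compP (swapP r) r).r (inl a) (inl b) ↔ r.r (inl a) (inl b)
    simp [compP_swapP_self_rel_iff]

theorem inThroughBlock_compP_swapP_self {a : Fin k} :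
    InThroughBlock (compP (swapP r) r) (inl a) ↔ InThroughBlock r (inl a) := by
  rw [inThroughBlock_inl_iff]
  simp only [compP_swapP_self_rel_iff]
  exact ⟨fun ⟨_, _, h⟩ => h.resolve_left Bool.noConfusion, fun h => ⟨a, r.refl _, Or.inr h⟩⟩

theorem throughMins_compP_swapP_self : throughMins (compP (swapP r) r) = throughMins r := by
  ext a
  simp only [mem_throughMins, upperSetoid_compP_swapP_self, inThroughBlock_compP_swapP_self]

theorem tP_compP_swapP_self : tP (compP (swapP r) r) = tP r := by
  rw [tP_eq_card_throughMins, tP_eq_card_throughMins, throughMins_compP_swapP_self]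

theorem tP_compP_self_swapP : tP (compP r (swapP r)) = tP r := by
  simpa only [swapP_swapP, tP_swapP] using tP_compP_swapP_self (swapP r)

end SelfComposition

section Projective

variable {k : ℕ} {p : PP k k}

theorem isProjective.compP_swapP_self (hp : isProjective p) : compP (swapP p) p = p := by
  rw [hp.1]
  exact hp.2

theorem compP_swapP_self_eq_of_upper {l : ℕ} {r : PP k l} (hp : isProjective p)
    (hu : ∀ a b, r.r (inl a) (inl b) ↔ p.r (inl a) (inl b))
    (ht : ∀ a, InThroughBlock r (inl a) ↔ InThroughBlock p (inl a)) :
    compP (swapP r) r = p := by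
  ext x y
  have hp_rel := compP_swapP_self_rel_iff p x y
  rw [hp.compP_swapP_self] at hp_rel
  rw [hp_rel, compP_swapP_self_rel_iff, hu, ht]

theorem isProjective.rel_inl_inr_self (hp : isProjective p) {a : Fin k}
    (ha : InThroughBlock p (inl a)) : p.r (inl a) (inr a) := by
  have h := compP_swapP_self_rel_iff p (inl a) (inr a)
  rw [hp.compP_swapP_self] at h
  exact h.2 ⟨p.refl _, Or.inr ha⟩

end Projective

section Noncrossing

variable {k l : ℕ}

theorem posP_inl_lt_inl {a b : Fin k} : posP k l (inl a) < posP k l (inl b) ↔ a < b :=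
  Iff.rfl

theorem posP_inr_lt_inr {a b : Fin l} : posP k l (inr a) < posP k l (inr b) ↔ b < a := by
  simp only [posP, Sum.elim_inr]
  omega

theorem posP_inl_lt_inr (a : Fin k) (b : Fin l) : posP k l (inl a) < posP k l (inr b) := by
  simp only [posP, Sum.elim_inl, Sum.elim_inr]
  omega

theorem not_posP_inr_lt_inl (a : Fin k) (b : Fin l) : ¬ posP k l (inr b) < posP k l (inl a) :=
  not_lt.2 (posP_inl_lt_inr a b).le

variable {p : PP k k}

/-- Otherwise the through-block of `b`, which reaches the lower row, would cross the block
of `a` and `c`. -/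
theorem isNC.rel_of_lt_of_lt (hnc : isNC p) (hp : isProjective p) {a b c : Fin k}
    (hab : a < b) (hbc : b < c) (hac : p.r (inl a) (inl c)) (hb : InThroughBlock p (inl b)) :
    p.r (inl a) (inl b) := by
  by_contra hn
  exact hnc ⟨inl a, inl b, inl c, inr b, hab, hbc, posP_inl_lt_inr c b, hac,
    hp.rel_inl_inr_self hb, hn⟩

theorem isNC.blockMin_lt_blockMin (hnc : isNC p) (hp : isProjective p) {a b : Fin k}
    (ha : InThroughBlock p (inl a)) (hab : a < b) (hn : ¬ p.r (inl a) (inl b)) :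
    blockMin (upperSetoid p) a < blockMin (upperSetoid p) b := by
  set s := upperSetoid p
  by_contra! hle
  have hne : blockMin s b ≠ blockMin s a := fun h =>
    hn ((blockMin_eq_blockMin_iff (s := s)).1 h.symm)
  have hrel : s (blockMin s b) (blockMin s a) :=
    hnc.rel_of_lt_of_lt hp (lt_of_le_of_ne hle hne) ((blockMin_le (s.refl a)).trans_lt hab)
      (s.symm (rel_blockMin s b)) (ha.of_rel (s.symm (rel_blockMin s a)))
  exact hne (by simpa only [blockMin_blockMin] using blockMin_eq_blockMin_iff.2 hrel)

end Noncrossing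

section Connecting

variable {k l : ℕ} {p : PP k k} {q : PP l l} (e : throughMins p ≃o throughMins q)

/-- Labels for the leftmost points of the upper blocks of `p`: a through-block is labelled by
the leftmost point of the through-block of `q` matched with it by `e`. -/
noncomputable def matchLabel (v : Fin k) : Fin l ⊕ Fin k :=
  if h : v ∈ throughMins p then inl (e ⟨v, h⟩) else inr v

theorem matchLabel_injective : Function.Injective (matchLabel e) :=
  Function.Injective.dite _ (inl_injective.comp (Subtype.val_injective.comp e.injective))
    (inr_injective.comp Subtype.val_injective) inl_ne_inr

/-- The partition `q_u* p_u` of the paper: the upper blocks of `p` on top, the upper blocks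
of `q` turned upside down at the bottom, with through-blocks glued along `e`. -/
noncomputable def connecting : PP k l :=
  Setoid.ker (Sum.elim (matchLabel e ∘ blockMin (upperSetoid p))
    (inl ∘ blockMin (upperSetoid q)))

variable {e}

theorem connecting_inl_inl {a b : Fin k} :
    (connecting e).r (inl a) (inl b) ↔ p.r (inl a) (inl b) :=
  (matchLabel_injective e).eq_iff.trans blockMin_eq_blockMin_iff

theorem connecting_inr_inr {a b : Fin l} :
    (connecting e).r (inr a) (inr b) ↔ q.r (inl a) (inl b) :=
  inl_injective.eq_iff.trans blockMin_eq_blockMin_iff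

theorem connecting_inl_inr {a : Fin k} {b : Fin l} :
    (connecting e).r (inl a) (inr b) ↔
      ∃ v : throughMins p, blockMin (upperSetoid p) a = v ∧
        (e v : Fin l) = blockMin (upperSetoid q) b := by
  change matchLabel e (blockMin (upperSetoid p) a) = inl (blockMin (upperSetoid q) b) ↔ _
  unfold matchLabel
  split_ifs with h
  · refine ⟨fun hv => ⟨⟨_, h⟩, rfl, inl_injective hv⟩, fun ⟨v, hav, hv⟩ => ?_⟩
    rw [← hv, ← (Subtype.ext hav : (⟨_, h⟩ : throughMins p) = v)]
  · exact iff_of_false id fun ⟨v, hav, _⟩ => h (hav ▸ v.2)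

theorem inThroughBlock_of_blockMin_mem {r : PP k l} {a : Fin k}
    (h : blockMin (upperSetoid r) a ∈ throughMins r) : InThroughBlock r (inl a) :=
  (mem_throughMins.1 h).1.of_rel (rel_blockMin (upperSetoid r) a)

theorem InThroughBlock.of_connecting_inl_inr {a : Fin k} {b : Fin l}
    (h : (connecting e).r (inl a) (inr b)) :
    InThroughBlock p (inl a) ∧ InThroughBlock q (inl b) := by
  obtain ⟨v, hav, hvb⟩ := connecting_inl_inr.1 h
  exact ⟨inThroughBlock_of_blockMin_mem (hav ▸ v.2),
    inThroughBlock_of_blockMin_mem (hvb ▸ (e v).2)⟩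

theorem inThroughBlock_connecting_inl {a : Fin k} :
    InThroughBlock (connecting e) (inl a) ↔ InThroughBlock p (inl a) := by
  refine ⟨fun ha => ?_, fun ha => ?_⟩
  · obtain ⟨b, hb⟩ := inThroughBlock_inl_iff.1 ha
    exact (InThroughBlock.of_connecting_inl_inr hb).1
  · set w := e ⟨_, blockMin_mem_throughMins ha⟩
    exact inThroughBlock_inl_iff.2
      ⟨w, connecting_inl_inr.2 ⟨_, rfl, (mem_throughMins.1 w.2).2.symm⟩⟩

theorem inThroughBlock_swapP_connecting_inl {b : Fin l} :
    InThroughBlock (swapP (connecting e)) (inl b) ↔ InThroughBlock q (inl b) := by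
  refine ⟨fun hb => ?_, fun hb => ?_⟩
  · obtain ⟨a, ha⟩ := inThroughBlock_inl_iff.1 hb
    exact (InThroughBlock.of_connecting_inl_inr ((connecting e).symm ha)).2
  · set v := e.symm ⟨_, blockMin_mem_throughMins hb⟩
    refine inThroughBlock_inl_iff.2 ⟨v, (connecting e).symm (connecting_inl_inr.2 ?_)⟩
    exact ⟨v, (mem_throughMins.1 v.2).2, by simp [v]⟩

theorem compP_swapP_connecting (hp : isProjective p) :
    compP (swapP (connecting e)) (connecting e) = p :=
  compP_swapP_self_eq_of_upper hp (fun _ _ => connecting_inl_inl)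
    (fun _ => inThroughBlock_connecting_inl)

theorem compP_connecting_swapP (hq : isProjective q) :
    compP (connecting e) (swapP (connecting e)) = q := by
  simpa only [swapP_swapP] using compP_swapP_self_eq_of_upper (r := swapP (connecting e)) hq
    (fun _ _ => connecting_inr_inr) (fun _ => inThroughBlock_swapP_connecting_inl)

theorem blockMin_lt_blockMin_of_connecting {a a' : Fin k} {b b' : Fin l}
    (h : (connecting e).r (inl a) (inr b)) (h' : (connecting e).r (inl a') (inr b'))
    (hlt : blockMin (upperSetoid p) a < blockMin (upperSetoid p) a') :
    blockMin (upperSetoid q) b < blockMin (upperSetoid q) b' := by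
  obtain ⟨v, hav, hvb⟩ := connecting_inl_inr.1 h
  obtain ⟨v', hav', hvb'⟩ := connecting_inl_inr.1 h'
  rw [← hvb, ← hvb']
  exact e.strictMono (Subtype.coe_lt_coe.1 (hav ▸ hav' ▸ hlt))

theorem isNC_connecting (hp : isProjective p) (hq : isProjective q) (hpnc : isNC p)
    (hqnc : isNC q) : isNC (connecting e) := by
  rintro ⟨x₁, x₂, x₃, x₄, h₁₂, h₂₃, h₃₄, r₁₃, r₂₄, n₁₂⟩
  -- the surviving cases have 4, 3, 2, 1 and 0 of the four points in the upper row
  rcases x₁ with a₁ | b₁ <;> rcases x₂ with a₂ | b₂ <;> rcases x₃ with a₃ | b₃ <;>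
    rcases x₄ with a₄ | b₄ <;>
    simp only [posP_inl_lt_inl, posP_inr_lt_inr, posP_inl_lt_inr, not_posP_inr_lt_inl]
      at h₁₂ h₂₃ h₃₄
  · exact hpnc ⟨inl a₁, inl a₂, inl a₃, inl a₄, h₁₂, h₂₃, h₃₄, connecting_inl_inl.1 r₁₃,
      connecting_inl_inl.1 r₂₄, mt connecting_inl_inl.2 n₁₂⟩
  · exact n₁₂ (connecting_inl_inl.2 (hpnc.rel_of_lt_of_lt hp h₁₂ h₂₃
      (connecting_inl_inl.1 r₁₃) (InThroughBlock.of_connecting_inl_inr r₂₄).1))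
  · have hlt := blockMin_lt_blockMin_of_connecting r₁₃ r₂₄ (hpnc.blockMin_lt_blockMin hp
      (InThroughBlock.of_connecting_inl_inr r₁₃).1 h₁₂ (mt connecting_inl_inl.2 n₁₂))
    refine lt_asymm hlt (hqnc.blockMin_lt_blockMin hq
      (InThroughBlock.of_connecting_inl_inr r₂₄).2 h₃₄ fun h => hlt.ne ?_)
    exact ((blockMin_eq_blockMin_iff (s := upperSetoid q)).2 h).symm
  · have h₄₃ := hqnc.rel_of_lt_of_lt hq h₃₄ h₂₃ (q.symm (connecting_inr_inr.1 r₂₄))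
      (InThroughBlock.of_connecting_inl_inr r₁₃).2
    exact n₁₂ ((connecting e).trans r₁₃ (connecting_inr_inr.2
      (q.trans (q.symm h₄₃) (q.symm (connecting_inr_inr.1 r₂₄)))))
  · refine hqnc ⟨inl b₄, inl b₃, inl b₂, inl b₁, h₃₄, h₂₃, h₁₂,
      q.symm (connecting_inr_inr.1 r₂₄), q.symm (connecting_inr_inr.1 r₁₃), fun h => n₁₂ ?_⟩
    exact connecting_inr_inr.2 (q.trans (connecting_inr_inr.1 r₁₃)
      (q.trans (q.symm h) (q.symm (connecting_inr_inr.1 r₂₄))))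

end Connecting

/-- in the category `NC`, two projective partitions are equivalent iff
they have the same number of through-blocks. -/
theorem nc_equivalence_iff_through_blocks {k l : ℕ} (p : PP k k) (q : PP l l)
    (hp : isProjective p) (hq : isProjective q) (hpnc : isNC p) (hqnc : isNC q) :
    (∃ r : PP k l, isNC r ∧ compP (swapP r) r = p ∧ compP r (swapP r) = q) ↔
      tP p = tP q := by
  constructor
  · rintro ⟨r, -, rfl, rfl⟩
    rw [tP_compP_swapP_self, tP_compP_self_swapP]
  · intro hpq
    rw [tP_eq_card_throughMins, tP_eq_card_throughMins] at hpq
    let e : throughMins p ≃o throughMins q :=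
      ((throughMins p).orderIsoOfFin hpq).symm.trans ((throughMins q).orderIsoOfFin rfl)
    exact ⟨connecting e, isNC_connecting hp hq hpnc hqnc, compP_swapP_connecting hp,
      compP_connecting_swapP hq⟩
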